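/- Let M = σ ∩ L be a toric monoid, where σ is a pointed rational polyhedral cone in the lattice L. Then the faces of M (submonoids F with a + b ∈ F ⟹ a, b ∈ F) are exactly the subsets of the form τ ∩ L, where τ ranges over the faces of the cone σ; equivalently, the faces of M are exactly the zero-loci in M of ℤ-linear functionals on L that are nonnegative on M. -/

import Mathlib

/-!
Write `σ = hull s` with `s ⊆ L` finite and let `s₀ = s ∩ F`. A face `F` of `M = L ∩ σ` is
saturated: if `x ∈ M` and `n • z - x ∈ M` for some `z ∈ F`, then `x ∈ F`. Every point of
`hull s₀` is dominated by a multiple of `∑ s₀ ∈ F`, and every `x ∈ σ` lies in the cone spanned by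
the generators `v` with `n • x - v ∈ σ` for some `n`; by saturation, `F = M ∩ hull s₀`. For a
generator `w ∈ s \ F`, saturation also gives `-w ∉ hull (s ∪ -s₀)`, so Farkas' lemma yields a
functional that is nonnegative on `s`, zero on `s₀` and positive at `w`. The sum `φ` of these
functionals vanishes on `s` exactly at `s₀`, hence `M ∩ hull s₀ = M ∩ ker φ`.
-/

/-- A face of an additive monoid `M` (realized as a submonoid of an ambient group) is a
submonoid `F ≤ M` such that `a + b ∈ F` implies `a, b ∈ F`. -/
def IsMonoidFace {V : Type} [AddCommGroup V] (M F : AddSubmonoid V) : Prop :=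
  F ≤ M ∧ ∀ a b : V, a ∈ M → b ∈ M → a + b ∈ F → a ∈ F ∧ b ∈ F

open PointedCone Pointwise

section Cone

variable {V : Type} [AddCommGroup V] [Module ℝ V]

lemma nonneg_of_mem_hull {s : Set V} {φ : V →ₗ[ℝ] ℝ} (hφ : ∀ v ∈ s, 0 ≤ φ v) {x : V}
    (hx : x ∈ hull ℝ s) : 0 ≤ φ x :=
  Submodule.span_le (p := (positive ℝ ℝ).comap φ) |>.2 hφ hx

lemma mem_hull_setOf_eq_zero_iff {s : Set V} {φ : V →ₗ[ℝ] ℝ} (hφ : ∀ v ∈ s, 0 ≤ φ v)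
    {x : V} (hx : x ∈ hull ℝ s) : x ∈ hull ℝ {v ∈ s | φ v = 0} ↔ φ x = 0 := by
  refine ⟨fun h => Submodule.span_le (p := ofSubmodule (LinearMap.ker φ)) |>.2
    (fun v hv => hv.2) h, fun hφx => ?_⟩
  induction hx using Submodule.span_induction with
  | mem v hv => exact Submodule.subset_span ⟨hv, hφx⟩
  | zero => exact zero_mem _
  | add x y hx hy ihx ihy =>
    rw [map_add, add_eq_zero_iff_of_nonneg (nonneg_of_mem_hull hφ hx)
      (nonneg_of_mem_hull hφ hy)] at hφx
    exact add_mem (ihx hφx.1) (ihy hφx.2)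
  | smul c x _ ih =>
    rw [← Nonneg.coe_smul, map_smul, smul_eq_mul, mul_eq_zero] at hφx
    rcases hφx with hc | hφx
    · simp [show c = 0 from Subtype.ext hc]
    · exact Submodule.smul_mem _ c (ih hφx)

lemma mem_hull_image_iff {W : Type} [AddCommGroup W] [Module ℝ W] (f : V →ₗ[ℝ] W) (s : Set V)
    {y : W} : y ∈ hull ℝ (f '' s) ↔ ∃ x ∈ hull ℝ s, f x = y := by
  have h : map f (hull ℝ s) = hull ℝ (f '' s) :=
    (Submodule.span_image (f.restrictScalars {c : ℝ // 0 ≤ c})).symm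
  rw [← h, mem_map]

open Classical in
/-- Farkas' lemma. If the functional `φ` obtained for `s.erase a` is negative at `a`, recurse on
the image of `s.erase a` under the projection onto `ker φ` along `a`. -/
theorem exists_dual_nonneg_of_notMem_hull (s : Finset V) {w : V}
    (hw : w ∉ hull ℝ (s : Set V)) : ∃ φ : V →ₗ[ℝ] ℝ, (∀ v ∈ s, 0 ≤ φ v) ∧ φ w < 0 := by
  rcases s.eq_empty_or_nonempty with rfl | ⟨a, ha⟩
  · have hw0 : w ≠ 0 := by simpa using hw
    obtain ⟨f, hf⟩ := Module.Projective.exists_dual_eq_one ℝ hw0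
    exact ⟨-f, by simp, by simp [hf]⟩
  have hs : s = insert a (s.erase a) := (Finset.insert_erase ha).symm
  have hsub : ((s.erase a : Finset V) : Set V) ⊆ s := Finset.coe_subset.2 (Finset.erase_subset a s)
  obtain ⟨φ, hφ, hφw⟩ :=
    exists_dual_nonneg_of_notMem_hull (s.erase a) fun h => hw (Submodule.span_mono hsub h)
  by_cases hφa : 0 ≤ φ a
  · refine ⟨φ, fun v hv => ?_, hφw⟩
    rcases eq_or_ne v a with rfl | hva
    · exact hφa
    · exact hφ v (Finset.mem_erase.2 ⟨hva, hv⟩)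
  push Not at hφa
  let p : V →ₗ[ℝ] V := LinearMap.id - (φ a)⁻¹ • φ.smulRight a
  have hp : ∀ u, p u = u - ((φ a)⁻¹ * φ u) • a := fun u => by simp [p, smul_smul]
  have hpa : p a = 0 := by rw [hp, inv_mul_cancel₀ hφa.ne, one_smul, sub_self]
  have hpw : p w ∉ hull ℝ ((s.erase a).image p : Set V) := by
    rw [Finset.coe_image, mem_hull_image_iff]
    rintro ⟨x, hx, hpx⟩
    have hr : 0 ≤ (φ a)⁻¹ * (φ w - φ x) :=
      mul_nonneg_of_nonpos_of_nonpos (inv_nonpos.2 hφa.le)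
        (by linarith [nonneg_of_mem_hull hφ hx])
    have hwx : w = x + ((φ a)⁻¹ * (φ w - φ x)) • a := by
      have h0 : p (w - x) = 0 := by rw [map_sub, hpx, sub_self]
      rw [hp, map_sub, sub_eq_zero] at h0
      rw [← h0, add_sub_cancel]
    apply hw
    rw [hwx, hs, Finset.coe_insert]
    exact add_mem (Submodule.span_mono (Set.subset_insert _ _) hx)
      (smul_mem _ hr (Submodule.subset_span (Set.mem_insert _ _)))
  obtain ⟨ψ, hψ, hψw⟩ := exists_dual_nonneg_of_notMem_hull ((s.erase a).image p) hpw
  refine ⟨ψ ∘ₗ p, fun v hv => ?_, hψw⟩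
  rcases eq_or_ne v a with rfl | hva
  · simp [hpa]
  · exact hψ _ (Finset.mem_image_of_mem p (Finset.mem_erase.2 ⟨hva, hv⟩))
termination_by s.card
decreasing_by
  · exact Finset.card_erase_lt_of_mem ha
  · exact Finset.card_image_le.trans_lt (Finset.card_erase_lt_of_mem ha)

lemma exists_nsmul_sum_sub_mem_hull (t : Finset V) {y : V} (hy : y ∈ hull ℝ (t : Set V)) :
    ∃ n : ℕ, n • ∑ v ∈ t, v - y ∈ hull ℝ (t : Set V) := by
  classical
  have hsum : ∑ v ∈ t, v ∈ hull ℝ (t : Set V) := sum_mem fun v hv => Submodule.subset_span hv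
  induction hy using Submodule.span_induction with
  | mem v hv =>
    refine ⟨1, ?_⟩
    rw [one_nsmul, ← Finset.sum_erase_eq_sub hv]
    exact sum_mem fun u hu => Submodule.subset_span (Finset.mem_of_mem_erase hu)
  | zero => exact ⟨0, by simp⟩
  | add x y _ _ ihx ihy =>
    obtain ⟨n, hn⟩ := ihx
    obtain ⟨m, hm⟩ := ihy
    refine ⟨n + m, ?_⟩
    convert add_mem hn hm using 1
    rw [add_nsmul]; abel
  | smul c x _ ih =>
    obtain ⟨n, hn⟩ := ih
    obtain ⟨m, hm⟩ := exists_nat_ge ((c : ℝ) * n)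
    refine ⟨m, ?_⟩
    have key : m • ∑ v ∈ t, v - c • x
        = c • (n • ∑ v ∈ t, v - x) + ((m : ℝ) - c * n) • ∑ v ∈ t, v := by
      simp only [← Nonneg.coe_smul, ← Nat.cast_smul_eq_nsmul ℝ, smul_sub, smul_smul, sub_smul]
      abel
    rw [key]
    exact add_mem (Submodule.smul_mem _ c hn) (smul_mem _ (sub_nonneg.2 hm) hsum)

lemma mem_hull_setOf_exists_nsmul_sub_mem {s : Set V} {x : V} (hx : x ∈ hull ℝ s) :
    x ∈ hull ℝ {v ∈ s | ∃ n : ℕ, n • x - v ∈ hull ℝ s} := by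
  induction hx using Submodule.span_induction with
  | mem v hv => exact Submodule.subset_span ⟨hv, 1, by simp⟩
  | zero => exact zero_mem _
  | add x y hx hy ihx ihy =>
    have mono : ∀ a b, b ∈ hull ℝ s → {v ∈ s | ∃ n : ℕ, n • a - v ∈ hull ℝ s} ⊆
        {v ∈ s | ∃ n : ℕ, n • (a + b) - v ∈ hull ℝ s} := by
      rintro a b hb v ⟨hv, n, hn⟩
      refine ⟨hv, n, ?_⟩
      convert add_mem hn (nsmul_mem hb n) using 1
      rw [nsmul_add]; abel
    refine add_mem (Submodule.span_mono (mono x y hy) ihx) (Submodule.span_mono ?_ ihy)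
    rw [add_comm x y]
    exact mono y x hx
  | smul c x hx ih =>
    rcases eq_or_ne c 0 with rfl | hc0
    · simp
    refine Submodule.smul_mem _ c (Submodule.span_mono ?_ ih)
    rintro v ⟨hv, n, hn⟩
    have hc : (0 : ℝ) < c := lt_of_le_of_ne c.2 (fun h => hc0 (Subtype.ext h.symm))
    obtain ⟨m, hm⟩ := exists_nat_ge ((n : ℝ) / c)
    refine ⟨hv, m, ?_⟩
    have key : m • c • x - v = ((m : ℝ) * c - n) • x + (n • x - v) := by
      simp only [← Nonneg.coe_smul, ← Nat.cast_smul_eq_nsmul ℝ, smul_smul, sub_smul]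
      abel
    rw [key]
    refine add_mem (smul_mem _ ?_ hx) hn
    rw [div_le_iff₀ hc] at hm
    linarith

end Cone

section MonoidFace

variable {V : Type} [AddCommGroup V] {M F : AddSubmonoid V}

theorem IsMonoidFace.mem_of_nsmul_sub_mem (hF : IsMonoidFace M F) {x z : V} (hx : x ∈ M)
    (hz : z ∈ F) (n : ℕ) (h : n • z - x ∈ M) : x ∈ F :=
  (hF.2 x _ hx h (by rw [add_sub_cancel]; exact nsmul_mem hz n)).1

theorem isMonoidFace_of_forall_mem_iff {R : Type} [AddCommMonoid R] [PartialOrder R]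
    [IsOrderedAddMonoid R] (φ : V →+ R) (hφ : ∀ x ∈ M, 0 ≤ φ x)
    (hF : ∀ x, x ∈ F ↔ x ∈ M ∧ φ x = 0) : IsMonoidFace M F := by
  refine ⟨fun x hx => ((hF x).1 hx).1, fun a b ha hb hab => ?_⟩
  have h := ((hF _).1 hab).2
  rw [map_add, add_eq_zero_iff_of_nonneg (hφ a ha) (hφ b hb)] at h
  exact ⟨(hF a).2 ⟨ha, h.1⟩, (hF b).2 ⟨hb, h.2⟩⟩

end MonoidFace

section ToricMonoid

open Classical

variable {V : Type} [AddCommGroup V] [Module ℝ V] {L : AddSubgroup V} {s : Finset V}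
  {M F : AddSubmonoid V}

theorem IsMonoidFace.mem_of_add_mem_hull_filter
    (hM : ∀ x, x ∈ M ↔ x ∈ L ∧ x ∈ hull ℝ (s : Set V)) (hF : IsMonoidFace M F) {x X : V}
    (hx : x ∈ M) (hX : X ∈ hull ℝ (s : Set V))
    (h : x + X ∈ hull ℝ (s.filter (· ∈ F) : Set V)) : x ∈ F := by
  obtain ⟨n, hn⟩ := exists_nsmul_sum_sub_mem_hull _ h
  have hu : ∑ v ∈ s.filter (· ∈ F), v ∈ F := sum_mem fun v hv => (Finset.mem_filter.1 hv).2
  refine hF.mem_of_nsmul_sub_mem hx hu n ((hM _).2 ⟨?_, ?_⟩)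
  · exact sub_mem ((hM _).1 (hF.1 (nsmul_mem hu n))).1 ((hM x).1 hx).1
  · rw [show n • ∑ v ∈ s.filter (· ∈ F), v - x
      = (n • ∑ v ∈ s.filter (· ∈ F), v - (x + X)) + X by abel]
    exact add_mem (Submodule.span_mono (Finset.coe_subset.2 (Finset.filter_subset _ s)) hn) hX

theorem IsMonoidFace.mem_iff_mem_hull_filter
    (hM : ∀ x, x ∈ M ↔ x ∈ L ∧ x ∈ hull ℝ (s : Set V)) (hF : IsMonoidFace M F)
    (hsL : ∀ v ∈ s, v ∈ L) (x : V) :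
    x ∈ F ↔ x ∈ M ∧ x ∈ hull ℝ (s.filter (· ∈ F) : Set V) := by
  refine ⟨fun hxF => ⟨hF.1 hxF, ?_⟩,
    fun ⟨hx, h⟩ => hF.mem_of_add_mem_hull_filter hM hx (zero_mem _) (by rwa [add_zero])⟩
  have hxM := hF.1 hxF
  refine Submodule.span_mono ?_ (mem_hull_setOf_exists_nsmul_sub_mem ((hM x).1 hxM).2)
  rintro v ⟨hv, n, hn⟩
  have hvM : v ∈ M := (hM v).2 ⟨hsL v hv, Submodule.subset_span hv⟩
  refine Finset.mem_filter.2 ⟨hv, hF.mem_of_nsmul_sub_mem hvM hxF n ((hM _).2 ⟨?_, hn⟩)⟩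
  exact sub_mem (nsmul_mem ((hM x).1 hxM).1 n) (hsL v hv)

theorem IsMonoidFace.exists_dual_pos_of_notMem
    (hM : ∀ x, x ∈ M ↔ x ∈ L ∧ x ∈ hull ℝ (s : Set V)) (hF : IsMonoidFace M F)
    (hsL : ∀ v ∈ s, v ∈ L) {w : V} (hws : w ∈ s) (hwF : w ∉ F) :
    ∃ φ : V →ₗ[ℝ] ℝ, (∀ v ∈ s, 0 ≤ φ v) ∧ (∀ v ∈ s, v ∈ F → φ v = 0) ∧ 0 < φ w := by
  have hw : -w ∉ hull ℝ ((s ∪ -s.filter (· ∈ F) : Finset V) : Set V) := by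
    rw [Finset.coe_union, hull, Submodule.span_union, Submodule.mem_sup]
    rintro ⟨X, hX, z, hz, hXz⟩
    rw [Finset.coe_neg, Submodule.span_neg_eq_neg, Submodule.mem_neg] at hz
    have hwX : w + X = -z := by rw [eq_neg_iff_add_eq_zero, add_assoc, hXz, add_neg_cancel]
    exact hwF (hF.mem_of_add_mem_hull_filter hM ((hM w).2 ⟨hsL w hws, Submodule.subset_span hws⟩)
      hX (hwX ▸ hz))
  obtain ⟨φ, hφ, hφw⟩ := exists_dual_nonneg_of_notMem_hull _ hw
  refine ⟨φ, fun v hv => hφ v (Finset.mem_union_left _ hv), fun v hv hvF => ?_, ?_⟩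
  · have hneg := hφ (-v) (Finset.mem_union_right _ (Finset.neg_mem_neg
      (Finset.mem_filter.2 ⟨hv, hvF⟩)))
    rw [map_neg, neg_nonneg] at hneg
    exact le_antisymm hneg (hφ v (Finset.mem_union_left _ hv))
  · rwa [map_neg, neg_lt_zero] at hφw

theorem IsMonoidFace.exists_dual_setOf_eq_zero_eq_filter
    (hM : ∀ x, x ∈ M ↔ x ∈ L ∧ x ∈ hull ℝ (s : Set V)) (hF : IsMonoidFace M F)
    (hsL : ∀ v ∈ s, v ∈ L) :
    ∃ φ : V →ₗ[ℝ] ℝ, (∀ v ∈ s, 0 ≤ φ v) ∧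
      {v ∈ (s : Set V) | φ v = 0} = (s.filter (· ∈ F) : Set V) := by
  choose! Φ hΦ_nonneg hΦ_zero hΦ_pos using
    fun w (hw : w ∈ s.filter (· ∉ F)) =>
      hF.exists_dual_pos_of_notMem hM hsL (Finset.mem_filter.1 hw).1 (Finset.mem_filter.1 hw).2
  refine ⟨∑ w ∈ s.filter (· ∉ F), Φ w, fun v hv => ?_, Set.ext fun v => ?_⟩
  · rw [LinearMap.sum_apply]
    exact Finset.sum_nonneg fun w hw => hΦ_nonneg w hw v hv
  simp only [Set.mem_ofPred_eq, Finset.coe_filter, Finset.mem_coe, LinearMap.sum_apply]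
  refine and_congr_right fun hv => ⟨fun h0 => ?_, fun hvF => ?_⟩
  · by_contra hvF
    refine (Finset.sum_pos' (fun w hw => hΦ_nonneg w hw v hv) ?_).ne' h0
    exact ⟨v, Finset.mem_filter.2 ⟨hv, hvF⟩, hΦ_pos v (Finset.mem_filter.2 ⟨hv, hvF⟩)⟩
  · exact Finset.sum_eq_zero fun w hw => hΦ_zero w hw v hv hvF

end ToricMonoid

theorem stmt_18_general {V : Type} [AddCommGroup V] [Module ℝ V]
    (L : AddSubgroup V)
    (σ : PointedCone ℝ V)
    (hrat : ∃ s : Finset V, (s : Set V) ⊆ (L : Set V) ∧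
      σ = Submodule.span {c : ℝ // 0 ≤ c} (s : Set V))
    (M : AddSubmonoid V) (hM : (M : Set V) = {x : V | x ∈ L ∧ x ∈ σ})
    (F : AddSubmonoid V) :
    IsMonoidFace M F ↔
      ∃ φ : V →ₗ[ℝ] ℝ, (∀ x ∈ σ, 0 ≤ φ x) ∧ ∀ x : V, (x ∈ F ↔ x ∈ M ∧ φ x = 0) := by
  obtain ⟨s, hsL, rfl⟩ := hrat
  have hM' : ∀ x, x ∈ M ↔ x ∈ L ∧ x ∈ hull ℝ (s : Set V) := fun x => Set.ext_iff.1 hM x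
  constructor
  · intro hF
    obtain ⟨φ, hφ, hφF⟩ := hF.exists_dual_setOf_eq_zero_eq_filter hM' hsL
    refine ⟨φ, fun x => nonneg_of_mem_hull hφ, fun x => ?_⟩
    rw [hF.mem_iff_mem_hull_filter hM' hsL, ← hφF]
    exact and_congr_right fun hx => mem_hull_setOf_eq_zero_iff hφ ((hM' x).1 hx).2
  · rintro ⟨φ, hφ, hF⟩
    exact isMonoidFace_of_forall_mem_iff φ.toAddMonoidHom (fun x hx => hφ x ((hM' x).1 hx).2) hF

/-- For a toric monoid `M = σ ∩ L` (with `σ` a pointed rational polyhedral cone in the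
lattice `L`), the faces of `M` are exactly the subsets `τ ∩ L` with `τ` a face of `σ`;
equivalently, the zero loci in `M` of linear functionals that are nonnegative on `σ`. -/
theorem stmt_18 {V : Type} [AddCommGroup V] [Module ℝ V] [FiniteDimensional ℝ V]
    (L : AddSubgroup V) (hLfg : L.FG)
    (σ : PointedCone ℝ V)
    (hrat : ∃ s : Finset V, (s : Set V) ⊆ (L : Set V) ∧
      σ = Submodule.span {c : ℝ // 0 ≤ c} (s : Set V))
    (hpointed : ∀ x : V, x ∈ σ → -x ∈ σ → x = 0)
    (M : AddSubmonoid V) (hM : (M : Set V) = {x : V | x ∈ L ∧ x ∈ σ})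
    (F : AddSubmonoid V) :
    IsMonoidFace M F ↔
      ∃ φ : V →ₗ[ℝ] ℝ, (∀ x ∈ σ, 0 ≤ φ x) ∧ ∀ x : V, (x ∈ F ↔ x ∈ M ∧ φ x = 0) :=
  stmt_18_general L σ hrat M hM F
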